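/- arXiv:1703.05016 — 4 statements merged into one kernel-verified Lean document; each statement's English description precedes it below -/
import Mathlib

section
/- Let P be a monoid homomorphism (mask) from Σ* to Δ* induced by a map Σ → Δ ∪ {ε}. For a prefix-closed language K ⊆ Σ* and an event a ∈ Σ, it holds that P⁻¹(P(Ka ∩ K)) ∩ Σ*a = (P⁻¹(P(K/a)))·a, where K/a = {w | wa ∈ K} is the right quotient, Ka = {wa | w ∈ K}, and P⁻¹(L) = {w | P(w) ∈ L}. -/
/-- The mask (monoid homomorphism) on words induced by a letter map `Σ → Δ ∪ {ε}`. -/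
def maskW {S D : Type*} (f : S → Option D) (w : List S) : List D := w.filterMap f

/-- A language is prefix-closed if it contains all prefixes of its members. -/
def IsPrefixClosed {S : Type*} (K : Set (List S)) : Prop :=
  ∀ w ∈ K, ∀ u, u <+: w → u ∈ K

theorem stmt0 {S D : Type*} (f : S → Option D) (K : Set (List S)) (a : S)
    (hK : IsPrefixClosed K) :
    {w : List S | maskW f w ∈ maskW f '' (((fun x => x ++ [a]) '' K) ∩ K)} ∩
      {w : List S | ∃ x : List S, w = x ++ [a]}
    = (fun x => x ++ [a]) '' {w : List S | maskW f w ∈ maskW f '' {x | x ++ [a] ∈ K}} := by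
  ext w
  constructor
  · rintro ⟨⟨z, ⟨⟨y, hyK, rfl⟩, hzK⟩, hmask⟩, ⟨x, rfl⟩⟩
    refine ⟨x, ⟨y, hzK, ?_⟩, rfl⟩
    have h : maskW f y ++ maskW f [a] = maskW f x ++ maskW f [a] := by
      simpa [maskW, List.filterMap_append] using hmask
    exact List.append_cancel_right h
  · rintro ⟨x, ⟨y, hyK, hmask⟩, rfl⟩
    refine ⟨⟨y ++ [a], ⟨⟨y, hK _ hyK y (List.prefix_append _ _), rfl⟩, hyK⟩, ?_⟩, ⟨x, rfl⟩⟩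
    simp [maskW, List.filterMap_append] at hmask ⊢
    rw [hmask]
end

section
/- Let P : Σ* → Δ* be a mask, let Σ' = {a' | a ∈ Σ} be a disjoint copy of Σ (disjoint from Σ and Δ), let h : (Σ ∪ Σ')* → (Δ ∪ Σ')* be the mask with h(a) = P(a) for a ∈ Σ and h(a') = a' for a' ∈ Σ', and let g : Σ'* → Σ* be the mask with g(a') = a. Then for any language K ⊆ Σ*: ⋃_{a∈Σ} (P⁻¹P(K/a))·a = g( h⁻¹(h(⋃_{a∈Σ} (K/a)·a')) ∩ Σ*Σ' ). -/
lemma maskW_key {S D : Type*} (f : S → Option D) (y : List S) (a : S) :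
    maskW (Sum.elim (fun a => (f a).map Sum.inl)
        (fun a => some (Sum.inr a)) : S ⊕ S → Option (D ⊕ S))
      (y.map Sum.inl ++ [Sum.inr a]) = (maskW f y).map Sum.inl ++ [Sum.inr a] := by
  simp [maskW, List.filterMap_append, List.filterMap_map, Function.comp,
    List.map_filterMap]

theorem stmt3 {S D : Type*} (f : S → Option D) (K : Set (List S)) :
    (⋃ a : S, (fun x => x ++ [a]) '' {w | maskW f w ∈ maskW f '' {x | x ++ [a] ∈ K}})
    = (fun w : List (S ⊕ S) => w.map (Sum.elim id id)) ''
        ({w : List (S ⊕ S) |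
            maskW (Sum.elim (fun a => (f a).map Sum.inl)
                (fun a => some (Sum.inr a)) : S ⊕ S → Option (D ⊕ S)) w ∈
            maskW (Sum.elim (fun a => (f a).map Sum.inl)
                (fun a => some (Sum.inr a)) : S ⊕ S → Option (D ⊕ S)) ''
              (⋃ a : S, (fun x : List S => x.map Sum.inl ++ [Sum.inr a]) ''
                {x | x ++ [a] ∈ K})}
          ∩ {w : List (S ⊕ S) | ∃ (x : List S) (a : S), w = x.map Sum.inl ++ [Sum.inr a]}) := by
  ext w
  constructor
  · rintro hw
    rw [Set.mem_iUnion] at hw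
    obtain ⟨a, x, ⟨y, hy, hfy⟩, rfl⟩ := hw
    refine ⟨x.map Sum.inl ++ [Sum.inr a], ⟨?_, ⟨x, a, rfl⟩⟩, by simp⟩
    refine ⟨y.map Sum.inl ++ [Sum.inr a], Set.mem_iUnion.2 ⟨a, ⟨y, hy, rfl⟩⟩, ?_⟩
    rw [maskW_key, maskW_key, hfy]
  · rintro ⟨v, ⟨hv, x, a, rfl⟩, rfl⟩
    obtain ⟨u, hu, hequ⟩ := hv
    rw [Set.mem_iUnion] at hu
    obtain ⟨b, y, hy, rfl⟩ := hu
    rw [maskW_key, maskW_key] at hequ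
    have hlast := List.append_inj' hequ (by simp)
    obtain ⟨h1, h2⟩ := hlast
    simp only [List.cons.injEq] at h2
    obtain ⟨rfl⟩ : b = a := by simpa using h2
    have h3 : maskW f y = maskW f x :=
      List.map_injective_iff.2 Sum.inl_injective h1
    rw [Set.mem_iUnion]
    exact ⟨a, x, ⟨y, hy, h3⟩, by simp⟩
end

section
/- Let P : Σ* → Δ* be a mask and K ⊆ Σ* a nonempty language. Then P̃⁻¹(P̃(pref(K))) = ⋃_{a∈Σ} [ P⁻¹(P(pref(K)·a ∩ pref(K))) ∩ Σ*a ] ∪ {ε}, where P̃(ε)=ε and P̃(sa)=P(s)·a. -/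
def pref {S : Type*} (K : Set (List S)) : Set (List S) := {u | ∃ w ∈ K, u <+: w}

def ptilde {S D : Type*} (f : S → Option D) (w : List S) : List (D ⊕ S) :=
  match w.reverse with
  | [] => []
  | a :: t => (maskW f t.reverse).map Sum.inl ++ [Sum.inr a]

lemma ptilde_concat {S D : Type*} (f : S → Option D) (x : List S) (a : S) :
    ptilde f (x ++ [a]) = (maskW f x).map Sum.inl ++ [Sum.inr a] := by
  simp [ptilde]

lemma pref_drop {S : Type*} {K : Set (List S)} {y : List S} {a : S}
    (h : y ++ [a] ∈ pref K) : y ∈ pref K := by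
  obtain ⟨w, hw, hp⟩ := h
  exact ⟨w, hw, (List.prefix_append y [a]).trans hp⟩

theorem stmt6 {S D : Type*} (f : S → Option D) (K : Set (List S)) (hK : K.Nonempty) :
    {w : List S | ptilde f w ∈ ptilde f '' pref K}
    = (⋃ a : S,
        {w : List S | maskW f w ∈ maskW f '' (((fun x => x ++ [a]) '' pref K) ∩ pref K)} ∩
          {w : List S | ∃ x : List S, w = x ++ [a]})
      ∪ {[]} := by
  ext w
  cases w using List.reverseRecOn with
  | nil =>
    obtain ⟨w0, hw0⟩ := hK
    simp only [Set.mem_union, Set.mem_singleton_iff, Set.mem_setOf_eq]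
    constructor
    · intro _; exact Or.inr trivial
    · intro _
      exact ⟨[], ⟨w0, hw0, List.nil_prefix⟩, rfl⟩
  | append_singleton x a =>
    simp only [Set.mem_union, Set.mem_singleton_iff, Set.mem_iUnion, Set.mem_inter_iff,
      Set.mem_setOf_eq]
    constructor
    · rintro ⟨u, hu, heq⟩
      rcases List.eq_nil_or_concat u with rfl | ⟨y, b, hc⟩
      · simp [ptilde, ptilde_concat] at heq
      · rw [List.concat_eq_append] at hc; subst hc
        rw [ptilde_concat, ptilde_concat] at heq
        obtain ⟨h1, h2⟩ := List.append_inj' heq rfl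
        have hb : b = a := by simpa using h2
        have hyx : maskW f y = maskW f x :=
          List.map_injective_iff.mpr Sum.inl_injective h1
        subst hb
        refine Or.inl ⟨b, ⟨y ++ [b], ⟨⟨y, pref_drop hu, rfl⟩, hu⟩, ?_⟩, ⟨x, rfl⟩⟩
        simp only [maskW, List.filterMap_append]
        rw [show y.filterMap f = x.filterMap f from hyx]
    · rintro (⟨b, ⟨u, ⟨⟨⟨y, hy, rfl⟩, hu⟩, hm⟩⟩, ⟨z, hz⟩⟩ | hnil)
      · obtain ⟨h1, h2⟩ := List.append_inj' hz rfl
        have hb : b = a := by simpa using h2.symm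
        subst hb
        refine ⟨y ++ [b], hu, ?_⟩
        simp only at hm
        rw [ptilde_concat, ptilde_concat]
        have : maskW f y = maskW f x := by
          simp only [maskW, List.filterMap_append] at hm
          exact List.append_cancel_right hm
        rw [this]
      · exact absurd hnil (by simp)
end

section
/- If K is a prefix-closed language over Σ and Σ_u ⊆ Σ, then K·Σ_u* is prefix-closed, contains K, and is controllable with respect to Σ* and Σ_u (i.e., (K·Σ_u*)·Σ_u ⊆ K·Σ_u*); moreover it is the smallest such language: any prefix-closed language M ⊇ K with M·Σ_u ⊆ M satisfies K·Σ_u* ⊆ M. -/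
theorem stmt18 {S : Type*} (K : Set (List S)) (Su : Set S) (hK : IsPrefixClosed K) :
    IsPrefixClosed {v : List S | ∃ w u, w ∈ K ∧ (∀ x ∈ u, x ∈ Su) ∧ v = w ++ u} ∧
    K ⊆ {v : List S | ∃ w u, w ∈ K ∧ (∀ x ∈ u, x ∈ Su) ∧ v = w ++ u} ∧
    (∀ v ∈ {v : List S | ∃ w u, w ∈ K ∧ (∀ x ∈ u, x ∈ Su) ∧ v = w ++ u}, ∀ x ∈ Su,
      v ++ [x] ∈ {v : List S | ∃ w u, w ∈ K ∧ (∀ x ∈ u, x ∈ Su) ∧ v = w ++ u}) ∧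
    (∀ M : Set (List S), IsPrefixClosed M → K ⊆ M →
      (∀ v ∈ M, ∀ x ∈ Su, v ++ [x] ∈ M) →
      {v : List S | ∃ w u, w ∈ K ∧ (∀ x ∈ u, x ∈ Su) ∧ v = w ++ u} ⊆ M) := by
  refine ⟨?_, ?_, ?_, ?_⟩
  · rintro v ⟨w, u, hw, hu, rfl⟩ p hp
    rcases List.prefix_or_prefix_of_prefix hp (List.prefix_append w u) with h | h
    · exact ⟨p, [], hK w hw p h, by simp, by simp⟩
    · obtain ⟨u', rfl⟩ := h
      have hu' : u' <+: u := (List.prefix_append_right_inj w).mp hp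
      exact ⟨w, u', hw, fun x hx => hu x (hu'.subset hx), rfl⟩
  · intro w hw
    exact ⟨w, [], hw, by simp, by simp⟩
  · rintro v ⟨w, u, hw, hu, rfl⟩ x hx
    refine ⟨w, u ++ [x], hw, ?_, by simp⟩
    intro y hy
    rcases List.mem_append.mp hy with h | h
    · exact hu y h
    · simp at h; subst h; exact hx
  · intro M hMpc hKM hMc v hv
    obtain ⟨w, u, hw, hu, rfl⟩ := hv
    have aux : ∀ u : List S, (∀ x ∈ u, x ∈ Su) → ∀ w ∈ M, w ++ u ∈ M := by
      intro u
      induction u with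
      | nil => intro _ w hw; simpa using hw
      | cons x u ih =>
        intro h w hw
        have h1 : w ++ [x] ∈ M := hMc w hw x (h x (by simp))
        have := ih (fun y hy => h y (by simp [hy])) (w ++ [x]) h1
        simpa using this
    exact aux u hu w (hKM hw)
end
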